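/- (Proposition 2) Let N = max_i end^{v_i} over all ℋ-nodes v₁,…,v_h of the syntax tree of Φ. For any signal x : ℕ → 𝒳 and any k > N: x ⊨ Φ (i.e., (x, 0) ⊨ Φ) if and only if the root induced satisfaction-vector entry computed from the basic set I(x_{0:k-1}) satisfies ι^root_{I(x_{0:k-1})}[0] = 1. -/

import Mathlib

namespace STLMon

/-- Three-valued satisfaction status: violated `0`, satisfied `1`, uncertain `?`. -/
inductive SatVal : Type
  | zero : SatVal
  | one : SatVal
  | unk : SatVal
deriving DecidableEq

/-- Direction to a child in the syntax tree (`left` is also used for only-children). -/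
inductive Dir : Type
  | left : Dir
  | right : Dir
deriving DecidableEq

/-- STL fragment (3): `Φ ::= G_{[a,b]} Φ | Φ₁ U'_{[a,b]} Φ₂ | Φ₁ ∧ Φ₂ | x ∈ ℋ`. -/
inductive Frag (X : Type) : Type
  | reg : Set X → Frag X
  | conj : Frag X → Frag X → Frag X
  | glob : ℕ → ℕ → Frag X → Frag X
  | untl : ℕ → ℕ → Frag X → Frag X → Frag X

namespace Frag

variable {X : Type}

/-- Semantics of the fragment: `fsat Φ x k` means `(x,k) ⊨ Φ`. -/
def fsat : Frag X → (ℕ → X) → ℕ → Prop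
  | reg H, x, k => x k ∈ H
  | conj φ ψ, x, k => fsat φ x k ∧ fsat ψ x k
  | glob a b φ, x, k => ∀ k', k + a ≤ k' → k' ≤ k + b → fsat φ x k'
  | untl a b φ ψ, x, k =>
      ∃ k', k + a ≤ k' ∧ k' ≤ k + b ∧ fsat ψ x k' ∧
        ∀ k'', k + a ≤ k'' → k'' ≤ k' → fsat φ x k''

/-- A node of the syntax tree of `Φ` is a path (list of directions) from the root;
`subAt Φ p` is the subformula `Φ^v` rooted at the node `v` with path `p`, if it exists. -/
def subAt : Frag X → List Dir → Option (Frag X)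
  | φ, [] => some φ
  | conj φ _, Dir.left :: p => subAt φ p
  | conj _ ψ, Dir.right :: p => subAt ψ p
  | glob _ _ φ, Dir.left :: p => subAt φ p
  | untl _ _ φ _, Dir.left :: p => subAt φ p
  | untl _ _ _ ψ, Dir.right :: p => subAt ψ p
  | _, _ => none

/-- Left endpoint `int^v` of the evaluation horizon of node `v`:
the sum of `a^{v'}` over all (strict) ancestors `v'` of `v`. -/
def intOf : Frag X → List Dir → ℕ
  | _, [] => 0
  | conj φ _, Dir.left :: p => intOf φ p
  | conj _ ψ, Dir.right :: p => intOf ψ p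
  | glob a _ φ, Dir.left :: p => a + intOf φ p
  | untl a _ φ _, Dir.left :: p => a + intOf φ p
  | untl a _ _ ψ, Dir.right :: p => a + intOf ψ p
  | _, _ => 0

/-- Right endpoint `end^v` of the evaluation horizon of node `v`:
the sum of `b^{v'}` over all (strict) ancestors `v'` of `v`. -/
def endOf : Frag X → List Dir → ℕ
  | _, [] => 0
  | conj φ _, Dir.left :: p => endOf φ p
  | conj _ ψ, Dir.right :: p => endOf ψ p
  | glob _ b φ, Dir.left :: p => b + endOf φ p
  | untl _ b φ _, Dir.left :: p => b + endOf φ p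
  | untl _ b _ ψ, Dir.right :: p => b + endOf ψ p
  | _, _ => 0

/-- `p` is an `ℋ`-node (a predicate leaf) of the syntax tree of `Φ`. -/
def IsHNode (Φ : Frag X) (p : List Dir) : Prop :=
  ∃ H : Set X, subAt Φ p = some (reg H)

/-- The satisfaction region `ℋ^v` attached to the `ℋ`-node at path `p`. -/
def regionAt (Φ : Frag X) (p : List Dir) : Set X :=
  match subAt Φ p with
  | some (reg H) => H
  | _ => ∅

/-- `(p, t)` is a meaningful entry of a basic set: `p` is an `ℋ`-node and
`t` lies in its evaluation horizon `[int^p, end^p]`. -/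
def Relevant (Φ : Frag X) (p : List Dir) (t : ℕ) : Prop :=
  IsHNode Φ p ∧ intOf Φ p ≤ t ∧ t ≤ endOf Φ p

/-- A basic set of satisfaction vectors: one three-valued entry for each `ℋ`-node
and each instant of its evaluation horizon. -/
def BasicSet (Φ : Frag X) : Type := ∀ p t, Relevant Φ p t → SatVal

/-- The entry of a basic set, totalized by `?` outside the relevant positions. -/
noncomputable def val (Φ : Frag X) (I : BasicSet Φ) (p : List Dir) (t : ℕ) : SatVal :=
  @dite _ (Relevant Φ p t) (Classical.dec _) (fun h => I p t h) (fun _ => SatVal.unk)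

open Classical in
/-- Induced satisfaction vectors (Definition 5): `ind β φ p t` is the induced value
`ι^v[t]` of the node `v` at path `p` carrying subformula `φ`, computed bottom-up from
the values `β` of the `ℋ`-node leaves. -/
noncomputable def ind (β : List Dir → ℕ → SatVal) : Frag X → List Dir → ℕ → SatVal
  | reg _, p, t => β p t
  | conj φ ψ, p, t =>
      if ind β φ (p ++ [Dir.left]) t = SatVal.zero ∨
         ind β ψ (p ++ [Dir.right]) t = SatVal.zero then SatVal.zero
      else if ind β φ (p ++ [Dir.left]) t = SatVal.one ∧
              ind β ψ (p ++ [Dir.right]) t = SatVal.one then SatVal.one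
      else SatVal.unk
  | glob a b φ, p, t =>
      if ∃ t', a ≤ t' ∧ t' ≤ b ∧ ind β φ (p ++ [Dir.left]) (t + t') = SatVal.zero then
        SatVal.zero
      else if ∀ t', a ≤ t' → t' ≤ b → ind β φ (p ++ [Dir.left]) (t + t') = SatVal.one then
        SatVal.one
      else SatVal.unk
  | untl a b φ ψ, p, t =>
      if (∀ t', a ≤ t' → t' ≤ b → ind β ψ (p ++ [Dir.right]) (t + t') = SatVal.zero) ∨
         (∀ t', a ≤ t' → t' ≤ b → ind β ψ (p ++ [Dir.right]) (t + t') = SatVal.one →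
            ∃ t'', a ≤ t'' ∧ t'' ≤ t' ∧ ind β φ (p ++ [Dir.left]) (t + t'') = SatVal.zero) then
        SatVal.zero
      else if ∃ t', a ≤ t' ∧ t' ≤ b ∧ ind β ψ (p ++ [Dir.right]) (t + t') = SatVal.one ∧
              ∀ t'', a ≤ t'' → t'' ≤ t' → ind β φ (p ++ [Dir.left]) (t + t'') = SatVal.one then
        SatVal.one
      else SatVal.unk

open Classical in
/-- Online update of a basic set upon observing state `xk` at instant `k`:
in each `ℋ`-node vector whose horizon contains `k`, only the entry at position `k`
is changed, to `1` if `xk ∈ ℋ^{v_i}` and to `0` otherwise. -/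
noncomputable def updateB (Φ : Frag X) (I : BasicSet Φ) (k : ℕ) (xk : X) : BasicSet Φ :=
  fun p t h =>
    if t = k then (if xk ∈ regionAt Φ p then SatVal.one else SatVal.zero) else I p t h

/-- The initial basic set `I₀`: every entry is `?`. -/
def initB (Φ : Frag X) : BasicSet Φ := fun _ _ _ => SatVal.unk

/-- `basicOf Φ x k` is `I(x_{0:k-1})`, obtained from `I₀` by successive updates
with `x 0, …, x (k-1)`. -/
noncomputable def basicOf (Φ : Frag X) (x : ℕ → X) : ℕ → BasicSet Φ
  | 0 => initB Φ
  | k + 1 => updateB Φ (basicOf Φ x k) k (x k)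

/-- Membership in `𝓘_k`: entries are `?` exactly at positions `t ≥ k`. -/
def InFam (Φ : Frag X) (I : BasicSet Φ) (k : ℕ) : Prop :=
  ∀ p t (h : Relevant Φ p t), (I p t h = SatVal.unk ↔ k ≤ t)

/-- The induced root satisfaction value `ι^root_I[0]` of a basic set `I`. -/
noncomputable def rootVal (Φ : Frag X) (I : BasicSet Φ) : SatVal :=
  ind (val Φ I) Φ [] 0

/-- `Is ∈ succ(I, k)`: `I ∈ 𝕀_k`, `Is ∈ 𝕀_{k+1}`, and `Is` agrees with `I`
on every `ℋ`-node entry at positions `t ∈ [int^v, min(k-1, end^v)]`. -/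
def Succ (Φ : Frag X) (k : ℕ) (I Is : BasicSet Φ) : Prop :=
  InFam Φ I k ∧ rootVal Φ I ≠ SatVal.zero ∧
  InFam Φ Is (k + 1) ∧ rootVal Φ Is ≠ SatVal.zero ∧
  ∀ p t (h : Relevant Φ p t), t < k → I p t h = Is p t h

/-- The consistent region `H_k(I, I_s) = ⋂ᵢ H_{i,k}`, where `H_{i,k}` is `ℋ^{v_i}` if
`ι_s^{v_i}[k] = 1`, the complement of `ℋ^{v_i}` if `ι_s^{v_i}[k] = 0`, and `𝒳` if `k`
is outside the horizon of `v_i`. -/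
def consReg (Φ : Frag X) (Is : BasicSet Φ) (k : ℕ) : Set X :=
  {x | ∀ p (h : Relevant Φ p k),
        (Is p k h = SatVal.zero → x ∉ regionAt Φ p) ∧
        (Is p k h = SatVal.one → x ∈ regionAt Φ p)}

end Frag

/-- Trajectory of the control system `x_{k+1} = f(x_k, u_k)`:
`traj f x u n` is the state after `n` steps from `x` under inputs `u`. -/
def traj {X U : Type} (f : X → U → X) (x : X) (u : ℕ → U) : ℕ → X
  | 0 => x
  | n + 1 => f (traj f x u n) (u n)

/-- The signal obtained from the prefix `xpre` on positions `0, …, k-1` followed by the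
state `xk` at position `k` and the trajectory `ξ_f(xk, u)` afterwards. -/
def runFrom {X U : Type} (f : X → U → X) (k : ℕ) (xpre : ℕ → X) (xk : X) (u : ℕ → U) :
    ℕ → X :=
  fun n => if n < k then xpre n else traj f xk u (n - k)

/-- One-step feasible set `Υ(S) = {x | ∃ u ∈ 𝒰, f(x,u) ∈ S}`. -/
def oneStep {X U : Type} (f : X → U → X) (S : Set X) : Set X :=
  {x | ∃ u : U, f x u ∈ S}

/-- The `I`-determined feasible set `X_k^I`: states `xk` from which some control makes the
signal, consisting of some prefix consistent with `I` followed by `xk` and the resulting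
trajectory, satisfy `Φ`. -/
noncomputable def feasSet {X U : Type} (Φ : Frag X) (f : X → U → X) (k : ℕ)
    (I : Frag.BasicSet Φ) : Set X :=
  {xk | ∃ xpre : ℕ → X, Frag.basicOf Φ xpre k = I ∧
          ∃ u : ℕ → U, Frag.fsat Φ (runFrom f k xpre xk u) 0}

end STLMon

open STLMon STLMon.Frag

/-!
Once `k` exceeds the end of every horizon, every `ℋ`-node entry of `I(x_{0:k-1})` is the
actual truth value of its predicate, so no `?` is left. On two-valued inputs the three-valued
rules of Definition 5 compute the Boolean semantics exactly, node by node, so the root value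
is `1` or `0` according as `x ⊨ Φ` or not.
-/

namespace STLMon

open Classical in
noncomputable def SatVal.ofProp (P : Prop) : SatVal :=
  if P then SatVal.one else SatVal.zero

namespace SatVal

@[simp]
lemma ofProp_eq_one_iff {P : Prop} : ofProp P = one ↔ P := by
  by_cases hP : P <;> simp [ofProp, hP]

@[simp]
lemma ofProp_eq_zero_iff {P : Prop} : ofProp P = zero ↔ ¬P := by
  by_cases hP : P <;> simp [ofProp, hP]

end SatVal

namespace Frag

open SatVal

variable {X : Type}

section Induced

variable {β : List Dir → ℕ → SatVal} {p : List Dir} {t a b : ℕ}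

lemma ind_conj_eq_ofProp {φ ψ : Frag X} {P Q : Prop}
    (hφ : ind β φ (p ++ [Dir.left]) t = ofProp P)
    (hψ : ind β ψ (p ++ [Dir.right]) t = ofProp Q) :
    ind β (conj φ ψ) p t = ofProp (P ∧ Q) := by
  by_cases hP : P <;> by_cases hQ : Q <;> simp [ind, hφ, hψ, hP, hQ, ofProp]

lemma ind_glob_eq_ofProp {φ : Frag X} {P : ℕ → Prop}
    (hφ : ∀ t', a ≤ t' → t' ≤ b → ind β φ (p ++ [Dir.left]) (t + t') = ofProp (P t')) :
    ind β (glob a b φ) p t = ofProp (∀ t', a ≤ t' → t' ≤ b → P t') := by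
  have hone : (∀ t', a ≤ t' → t' ≤ b → ind β φ (p ++ [Dir.left]) (t + t') = one) ↔
      ∀ t', a ≤ t' → t' ≤ b → P t' :=
    forall_congr' fun t' => forall_congr' fun ha => forall_congr' fun hb => by
      rw [hφ t' ha hb, ofProp_eq_one_iff]
  by_cases hP : ∀ t', a ≤ t' → t' ≤ b → P t'
  · rw [ind, if_neg, if_pos (hone.mpr hP), ofProp, if_pos hP]
    rintro ⟨t', ha, hb, hzero⟩
    cases (hone.mpr hP t' ha hb).symm.trans hzero
  · rw [ind, if_pos, ofProp, if_neg hP]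
    push Not at hP
    obtain ⟨t', ha, hb, hnP⟩ := hP
    exact ⟨t', ha, hb, by rwa [hφ t' ha hb, ofProp_eq_zero_iff]⟩

lemma ind_untl_eq_ofProp {φ ψ : Frag X} {P Q : ℕ → Prop}
    (hφ : ∀ t', a ≤ t' → t' ≤ b → ind β φ (p ++ [Dir.left]) (t + t') = ofProp (P t'))
    (hψ : ∀ t', a ≤ t' → t' ≤ b → ind β ψ (p ++ [Dir.right]) (t + t') = ofProp (Q t')) :
    ind β (untl a b φ ψ) p t =
      ofProp (∃ t', a ≤ t' ∧ t' ≤ b ∧ Q t' ∧ ∀ t'', a ≤ t'' → t'' ≤ t' → P t'') := by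
  by_cases hU : ∃ t', a ≤ t' ∧ t' ≤ b ∧ Q t' ∧ ∀ t'', a ≤ t'' → t'' ≤ t' → P t''
  · obtain ⟨t', ha, hb, hQ, hP⟩ := hU
    have hψ_one : ind β ψ (p ++ [Dir.right]) (t + t') = one := by simpa [hψ t' ha hb] using hQ
    have hφ_one : ∀ t'', a ≤ t'' → t'' ≤ t' → ind β φ (p ++ [Dir.left]) (t + t'') = one :=
      fun t'' h₁ h₂ => by simpa [hφ t'' h₁ (h₂.trans hb)] using hP t'' h₁ h₂
    rw [ind, if_neg, if_pos ⟨t', ha, hb, hψ_one, hφ_one⟩, ofProp, if_pos ⟨t', ha, hb, hQ, hP⟩]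
    rintro (hzero | hzero)
    · cases hψ_one.symm.trans (hzero t' ha hb)
    · obtain ⟨t'', h₁, h₂, h₃⟩ := hzero t' ha hb hψ_one
      cases (hφ_one t'' h₁ h₂).symm.trans h₃
  · rw [ind, if_pos, ofProp, if_neg hU]
    refine Or.inr fun t' ha hb hψ_one => ?_
    rw [hψ t' ha hb, ofProp_eq_one_iff] at hψ_one
    push Not at hU
    obtain ⟨t'', h₁, h₂, hnP⟩ := hU t' ha hb hψ_one
    exact ⟨t'', h₁, h₂, by simpa [hφ t'' h₁ (h₂.trans hb)]⟩

end Induced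

lemma fsat_glob_iff {a b t : ℕ} {φ : Frag X} {x : ℕ → X} :
    fsat (glob a b φ) x t ↔ ∀ t', a ≤ t' → t' ≤ b → fsat φ x (t + t') := by
  refine ⟨fun h t' ha hb => h _ (by omega) (by omega), fun h k' h₁ h₂ => ?_⟩
  obtain ⟨t', rfl⟩ := Nat.exists_eq_add_of_le (le_of_add_le_left h₁)
  exact h t' (by omega) (by omega)

lemma fsat_untl_iff {a b t : ℕ} {φ ψ : Frag X} {x : ℕ → X} :
    fsat (untl a b φ ψ) x t ↔ ∃ t', a ≤ t' ∧ t' ≤ b ∧ fsat ψ x (t + t') ∧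
      ∀ t'', a ≤ t'' → t'' ≤ t' → fsat φ x (t + t'') := by
  constructor
  · rintro ⟨k', h₁, h₂, hψ, hφ⟩
    obtain ⟨t', rfl⟩ := Nat.exists_eq_add_of_le (le_of_add_le_left h₁)
    exact ⟨t', by omega, by omega, hψ, fun t'' h₁ h₂ => hφ _ (by omega) (by omega)⟩
  · rintro ⟨t', ha, hb, hψ, hφ⟩
    refine ⟨t + t', by omega, by omega, hψ, fun k'' h₁ h₂ => ?_⟩
    obtain ⟨t'', rfl⟩ := Nat.exists_eq_add_of_le (le_of_add_le_left h₁)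
    exact hφ t'' (by omega) (by omega)

/-- `φ` sits at path `p` of the whole tree and is evaluated at time `t`, so the horizons of its
leaves are shifted by `t`. -/
def AgreesOnLeaves (β : List Dir → ℕ → SatVal) (x : ℕ → X) (φ : Frag X) (p : List Dir)
    (t : ℕ) : Prop :=
  ∀ q H s, subAt φ q = some (reg H) → t + intOf φ q ≤ s → s ≤ t + endOf φ q →
    β (p ++ q) s = ofProp (x s ∈ H)

/-- `[a, b]` is the interval of the node; a `∧`-node is covered by `a = b = 0`. -/
lemma AgreesOnLeaves.child {β : List Dir → ℕ → SatVal} {x : ℕ → X} {φ χ : Frag X}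
    {p : List Dir} {t : ℕ} (h : AgreesOnLeaves β x φ p t) (d : Dir) {a b : ℕ}
    (hsub : ∀ q, subAt φ (d :: q) = subAt χ q) (hint : ∀ q, intOf φ (d :: q) = a + intOf χ q)
    (hend : ∀ q, endOf φ (d :: q) = b + endOf χ q) {t' : ℕ} (ha : a ≤ t') (hb : t' ≤ b) :
    AgreesOnLeaves β x χ (p ++ [d]) (t + t') := by
  intro q H s hq h₁ h₂
  simpa using h (d :: q) H s (by rwa [hsub]) (by rw [hint]; omega) (by rw [hend]; omega)

theorem ind_eq_ofProp_fsat {β : List Dir → ℕ → SatVal} {x : ℕ → X} :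
    ∀ (φ : Frag X) (p : List Dir) (t : ℕ),
      AgreesOnLeaves β x φ p t → ind β φ p t = ofProp (fsat φ x t)
  | reg H, p, t, h => by simpa [ind, fsat] using h [] H t rfl (by simp [intOf]) (by simp [endOf])
  | conj φ ψ, p, t, h =>
      ind_conj_eq_ofProp
        (ind_eq_ofProp_fsat φ _ t <| h.child Dir.left (a := 0) (b := 0) (fun _ => rfl)
          (fun _ => (zero_add _).symm) (fun _ => (zero_add _).symm) le_rfl le_rfl)
        (ind_eq_ofProp_fsat ψ _ t <| h.child Dir.right (a := 0) (b := 0) (fun _ => rfl)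
          (fun _ => (zero_add _).symm) (fun _ => (zero_add _).symm) le_rfl le_rfl)
  | glob a b φ, p, t, h => by
      rw [fsat_glob_iff]
      exact ind_glob_eq_ofProp fun t' ha hb => ind_eq_ofProp_fsat φ _ _ <|
        h.child Dir.left (fun _ => rfl) (fun _ => rfl) (fun _ => rfl) ha hb
  | untl a b φ ψ, p, t, h => by
      rw [fsat_untl_iff]
      exact ind_untl_eq_ofProp
        (fun t' ha hb => ind_eq_ofProp_fsat φ _ _ <|
          h.child Dir.left (fun _ => rfl) (fun _ => rfl) (fun _ => rfl) ha hb)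
        (fun t' ha hb => ind_eq_ofProp_fsat ψ _ _ <|
          h.child Dir.right (fun _ => rfl) (fun _ => rfl) (fun _ => rfl) ha hb)

lemma basicOf_of_lt {Φ : Frag X} {x : ℕ → X} {k : ℕ} {p : List Dir} {t : ℕ}
    (h : Relevant Φ p t) (ht : t < k) :
    basicOf Φ x k p t h = ofProp (x t ∈ regionAt Φ p) := by
  induction k with
  | zero => omega
  | succ k ih =>
    by_cases htk : t = k
    · subst htk
      simp [basicOf, updateB, ofProp]
    · simp [basicOf, updateB, htk, ih (by omega)]

lemma agreesOnLeaves_basicOf {Φ : Frag X} {x : ℕ → X} {k : ℕ}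
    (hk : ∀ p, IsHNode Φ p → endOf Φ p < k) :
    AgreesOnLeaves (val Φ (basicOf Φ x k)) x Φ [] 0 := by
  intro q H s hq h₁ h₂
  have hrel : Relevant Φ q s := ⟨⟨H, hq⟩, by simpa using h₁, by simpa using h₂⟩
  have hreg : regionAt Φ q = H := by simp [regionAt, hq]
  have hs : s < k := lt_of_le_of_lt hrel.2.2 (hk q hrel.1)
  simp [val, hrel, basicOf_of_lt hrel hs, hreg]

end Frag
end STLMon

/-- (Proposition 2) If `k > N`, where `N` is the largest right endpoint `end^{v_i}` over
all `ℋ`-nodes of the syntax tree of `Φ`, then `x ⊨ Φ` (i.e. `(x,0) ⊨ Φ`) iff the root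
induced satisfaction-vector entry computed from `I(x_{0:k-1})` satisfies
`ι^root_{I(x_{0:k-1})}[0] = 1`. -/
theorem sat_iff_rootVal_one {X : Type} (Φ : Frag X) (x : ℕ → X) (k : ℕ)
    (hk : ∀ p, IsHNode Φ p → endOf Φ p < k) :
    fsat Φ x 0 ↔ rootVal Φ (basicOf Φ x k) = SatVal.one := by
  rw [rootVal, ind_eq_ofProp_fsat Φ [] 0 (agreesOnLeaves_basicOf hk), SatVal.ofProp_eq_one_iff]
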